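/- Let X be a complete, locally compact, geodesic metric space that is δ-hyperbolic, and let T be a group acting on X by isometries such that every T-orbit is a compact subset of X and there is B ≥ 0 with diam(T·x) ≤ B for every x ∈ X (T acts as a tremble with compact orbits, e.g. T is a compact subgroup of the isometry group). Then there exist δ' ≥ 0, a complete, locally compact, geodesic, δ'-hyperbolic metric space X', and a surjective map π : X → X' that is constant on T-orbits and satisfies d(π(x), π(y)) ≤ d(x, y) ≤ d(π(x), π(y)) + 2B for all x, y ∈ X; in particular π is a continuous (1, 2B)-quasi-isometry from X onto the quotient of X by the T-orbits. -/

import Mathlib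

open Set Metric

/-- The Gromov product `⟨x,y⟩_o = (d(x,o) + d(y,o) − d(x,y))/2`. -/
noncomputable def gromovProd {X : Type*} [PseudoMetricSpace X] (o x y : X) : ℝ :=
  (dist x o + dist y o - dist x y) / 2

/-- `α` is a unit-speed geodesic from `x` to `y`, parametrized on `[0, dist x y]`. -/
def IsGeodesicSeg {X : Type*} [PseudoMetricSpace X] (x y : X) (α : ℝ → X) : Prop :=
  α 0 = x ∧ α (dist x y) = y ∧
    ∀ s ∈ Set.Icc (0 : ℝ) (dist x y), ∀ t ∈ Set.Icc (0 : ℝ) (dist x y),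
      dist (α s) (α t) = |s - t|

/-- A metric space is geodesic if any two points are joined by a unit-speed geodesic. -/
def IsGeodesicSpace (X : Type*) [PseudoMetricSpace X] : Prop :=
  ∀ x y : X, ∃ α : ℝ → X, IsGeodesicSeg x y α

/-- `X` is `δ`-hyperbolic: for all `a b c`, geodesics `α` from `a` to `b` and `γ` from `a`
to `c` satisfy `dist (α t) (γ t) ≤ δ` for `t ∈ [0, ⟨b,c⟩_a]`. -/
def IsDeltaHyperbolic (X : Type*) [PseudoMetricSpace X] (δ : ℝ) : Prop :=
  ∀ a b c : X, ∀ α γ : ℝ → X, IsGeodesicSeg a b α → IsGeodesicSeg a c γ →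
    ∀ t ∈ Set.Icc (0 : ℝ) (gromovProd a b c), dist (α t) (γ t) ≤ δ

universe u

section AuxGeo

variable {X : Type*} [PseudoMetricSpace X]

lemma geo_dist_left {x y : X} {α : ℝ → X} (h : IsGeodesicSeg x y α) {s : ℝ}
    (hs : s ∈ Set.Icc (0 : ℝ) (dist x y)) : dist x (α s) = s := by
  have h0 : (0 : ℝ) ∈ Set.Icc (0 : ℝ) (dist x y) := ⟨le_refl 0, dist_nonneg⟩
  have := h.2.2 0 h0 s hs
  rw [h.1] at this
  rw [this, zero_sub, abs_neg, abs_of_nonneg hs.1]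

lemma geo_dist_right {x y : X} {α : ℝ → X} (h : IsGeodesicSeg x y α) {s : ℝ}
    (hs : s ∈ Set.Icc (0 : ℝ) (dist x y)) : dist (α s) y = dist x y - s := by
  have hD : dist x y ∈ Set.Icc (0 : ℝ) (dist x y) := ⟨dist_nonneg, le_refl _⟩
  have := h.2.2 s hs (dist x y) hD
  rw [h.2.1] at this
  rw [this, abs_of_nonpos (by linarith [hs.2])]
  ring

lemma gromovProd_nonneg (o x y : X) : 0 ≤ gromovProd o x y := by
  have h1 := dist_triangle x o y
  have h2 : dist o y = dist y o := dist_comm o y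
  unfold gromovProd
  linarith

lemma gromovProd_le_left (o x y : X) : gromovProd o x y ≤ dist x o := by
  have h1 := dist_triangle y x o
  have h2 : dist x y = dist y x := dist_comm x y
  unfold gromovProd
  linarith

lemma gromovProd_le_right (o x y : X) : gromovProd o x y ≤ dist y o := by
  have h1 := dist_triangle x y o
  unfold gromovProd
  linarith

end AuxGeo

section Abstract

variable {X : Type*} {Q : Type*} [MetricSpace X] [PseudoMetricSpace Q]
variable {δ B : ℝ} {π : X → Q}

/-- Key lemma: any geodesic in the quotient stays `2δ+B`-close (at equal times) to the
projection of a geodesic in `X` between representatives realizing the quotient distance. -/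
lemma quot_geo_close
    (hδ : 0 ≤ δ) (hB : 0 ≤ B)
    (hgeo : IsGeodesicSpace X) (hhyp : IsDeltaHyperbolic X δ)
    (H1 : ∀ x y : X, dist (π x) (π y) ≤ dist x y)
    (H2 : ∀ (x : X) (y' : Q), ∃ y : X, π y = y' ∧ dist x y = dist (π x) y')
    (H3 : ∀ y z : X, π y = π z → dist y z ≤ B)
    {a b : X} (hab : dist (π a) (π b) = dist a b)
    {α β' : ℝ → _} (hα : IsGeodesicSeg a b α) (hβ : IsGeodesicSeg (π a) (π b) β')
    {s : ℝ} (hs : s ∈ Set.Icc (0 : ℝ) (dist a b)) :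
    dist (β' s) (π (α s)) ≤ 2 * δ + B := by
  set D := dist a b with hD
  have hs' : s ∈ Set.Icc (0 : ℝ) (dist (π a) (π b)) := by rw [hab]; exact hs
  -- representative of β' s close to a
  obtain ⟨p, hp, hpa⟩ := H2 a (β' s)
  have hap : dist a p = s := by
    rw [hpa, geo_dist_left hβ hs']
  -- representative of π b close to p
  obtain ⟨c, hc, hpc⟩ := H2 p (π b)
  have hpcs : dist p c = D - s := by
    rw [hpc, hp, geo_dist_right hβ hs', hab]
  have hacD : dist a c = D := by
    have h1 : dist a c ≤ D := by
      calc dist a c ≤ dist a p + dist p c := dist_triangle a p c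
        _ = D := by rw [hap, hpcs]; ring
    have h2 : D ≤ dist a c := by
      calc D = dist a b := hD
        _ = dist (π a) (π b) := hab.symm
        _ = dist (π a) (π c) := by rw [hc]
        _ ≤ dist a c := H1 a c
    linarith
  obtain ⟨τ, hτ⟩ := hgeo a p
  obtain ⟨σ, hσ⟩ := hgeo a c
  -- p is δ-close to σ s
  have hgp : gromovProd a p c = s := by
    unfold gromovProd
    rw [dist_comm p a, hap, dist_comm c a, hacD, hpcs]
    ring
  have hps : dist p (σ s) ≤ δ := by
    have := hhyp a p c τ σ hτ hσ s (by rw [hgp]; exact ⟨hs.1, le_refl s⟩)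
    have hτs : τ s = p := by
      have : τ (dist a p) = p := hτ.2.1
      rwa [hap] at this
    rwa [hτs] at this
  -- σ is close to α
  have hcb : dist c b ≤ B := H3 c b hc
  set g := gromovProd a c b with hg
  have hg0 : 0 ≤ g := gromovProd_nonneg a c b
  have hgD : g ≤ D := by
    have := gromovProd_le_left a c b
    rw [dist_comm c a, hacD] at this
    exact this
  have hgDB : D - B / 2 ≤ g := by
    have : g = (dist c a + dist b a - dist c b) / 2 := rfl
    rw [dist_comm c a, hacD, dist_comm b a, ← hD] at this
    rw [this]
    linarith
  have hσα : dist (σ s) (α s) ≤ δ + B := by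
    rcases le_or_gt s g with hsg | hsg
    · have := hhyp a c b σ α hσ hα s ⟨hs.1, hsg⟩
      linarith
    · have hsgB : s - g ≤ B / 2 := by linarith [hs.2]
      have hgIccc : g ∈ Set.Icc (0 : ℝ) (dist a c) := by rw [hacD]; exact ⟨hg0, hgD⟩
      have hgIccb : g ∈ Set.Icc (0 : ℝ) (dist a b) := ⟨hg0, hgD⟩
      have hsIccc : s ∈ Set.Icc (0 : ℝ) (dist a c) := by rw [hacD]; exact hs
      have h1 : dist (σ s) (σ g) = |s - g| := hσ.2.2 s hsIccc g hgIccc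
      have h2 : dist (α g) (α s) = |g - s| := hα.2.2 g hgIccb s hs
      have h3 := hhyp a c b σ α hσ hα g ⟨hg0, le_refl g⟩
      have habs1 : |s - g| = s - g := abs_of_nonneg (by linarith)
      have habs2 : |g - s| = s - g := by rw [abs_sub_comm]; exact habs1
      calc dist (σ s) (α s) ≤ dist (σ s) (σ g) + dist (σ g) (α g) + dist (α g) (α s) :=
            dist_triangle4 _ _ _ _
        _ = (s - g) + dist (σ g) (α g) + (s - g) := by rw [h1, h2, habs1, habs2]
        _ ≤ (s - g) + δ + (s - g) := by linarith
        _ ≤ δ + B := by linarith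
  calc dist (β' s) (π (α s)) = dist (π p) (π (α s)) := by rw [hp]
    _ ≤ dist p (α s) := H1 p (α s)
    _ ≤ dist p (σ s) + dist (σ s) (α s) := dist_triangle _ _ _
    _ ≤ δ + (δ + B) := by linarith
    _ = 2 * δ + B := by ring

/-- The quotient is geodesic. -/
lemma quot_geodesic
    (hgeo : IsGeodesicSpace X)
    (H0 : Function.Surjective π)
    (H1 : ∀ x y : X, dist (π x) (π y) ≤ dist x y)
    (H2 : ∀ (x : X) (y' : Q), ∃ y : X, π y = y' ∧ dist x y = dist (π x) y') :
    IsGeodesicSpace Q := by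
  intro x' y'
  obtain ⟨a, rfl⟩ := H0 x'
  obtain ⟨b, hb, hab⟩ := H2 a y'
  subst hb
  obtain ⟨α, hα⟩ := hgeo a b
  refine ⟨π ∘ α, ?_, ?_, ?_⟩
  · simp [hα.1]
  · simp only [Function.comp_apply]
    rw [← hab, hα.2.1]
  · intro s hs t ht
    rw [← hab] at hs ht
    have key : ∀ u v : ℝ, u ∈ Set.Icc (0:ℝ) (dist a b) → v ∈ Set.Icc (0:ℝ) (dist a b) →
        u ≤ v → dist (π (α u)) (π (α v)) = v - u := by
      intro u v hu hv huv
      have hle : dist (π (α u)) (π (α v)) ≤ v - u := by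
        have := H1 (α u) (α v)
        rw [hα.2.2 u hu v hv, abs_of_nonpos (by linarith), neg_sub] at this
        exact this
      have hge : v - u ≤ dist (π (α u)) (π (α v)) := by
        have t1 : dist (π a) (π (α u)) ≤ u := by
          have := H1 a (α u)
          rw [geo_dist_left hα hu] at this
          calc dist (π a) (π (α u)) = dist (π (α 0)) (π (α u)) := by rw [hα.1]
            _ ≤ u := by rw [hα.1]; exact this
        have t2 : dist (π (α v)) (π b) ≤ dist a b - v := by
          have := H1 (α v) b
          rw [geo_dist_right hα hv] at this
          exact this
        have t3 : dist (π a) (π b) ≤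
            dist (π a) (π (α u)) + dist (π (α u)) (π (α v)) + dist (π (α v)) (π b) :=
          dist_triangle4 _ _ _ _
        rw [← hab] at t3
        linarith
      have : dist (π (α u)) (π (α v)) = v - u := le_antisymm hle hge
      exact this
    simp only [Function.comp_apply]
    rcases le_or_gt s t with hst | hst
    · rw [key s t hs ht hst, abs_of_nonpos (by linarith), neg_sub]
    · rw [dist_comm, key t s ht hs hst.le, abs_of_nonneg (by linarith)]

/-- The quotient is `5δ+4B`-hyperbolic. -/
lemma quot_hyperbolic
    (hδ : 0 ≤ δ) (hB : 0 ≤ B)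
    (hgeo : IsGeodesicSpace X) (hhyp : IsDeltaHyperbolic X δ)
    (H0 : Function.Surjective π)
    (H1 : ∀ x y : X, dist (π x) (π y) ≤ dist x y)
    (H2 : ∀ (x : X) (y' : Q), ∃ y : X, π y = y' ∧ dist x y = dist (π x) y')
    (H3 : ∀ y z : X, π y = π z → dist y z ≤ B)
    (H4 : ∀ x y : X, dist x y ≤ dist (π x) (π y) + 2 * B) :
    IsDeltaHyperbolic Q (5 * δ + 4 * B) := by
  intro a' b' c' α' γ' hα' hγ' t ht
  obtain ⟨a, rfl⟩ := H0 a'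
  obtain ⟨b, hb, habd⟩ := H2 a b'
  obtain ⟨c, hc, hacd⟩ := H2 a c'
  subst hb; subst hc
  obtain ⟨α, hα⟩ := hgeo a b
  obtain ⟨γ, hγ⟩ := hgeo a c
  have htb : t ∈ Set.Icc (0 : ℝ) (dist a b) := by
    refine ⟨ht.1, ?_⟩
    have h := gromovProd_le_left (π a) (π b) (π c)
    rw [dist_comm] at h
    rw [habd]
    exact le_trans ht.2 h
  have htc : t ∈ Set.Icc (0 : ℝ) (dist a c) := by
    refine ⟨ht.1, ?_⟩
    have h := gromovProd_le_right (π a) (π b) (π c)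
    rw [dist_comm] at h
    rw [hacd]
    exact le_trans ht.2 h
  have k1 : dist (α' t) (π (α t)) ≤ 2 * δ + B :=
    quot_geo_close hδ hB hgeo hhyp H1 H2 H3 habd.symm hα hα' htb
  have k2 : dist (γ' t) (π (γ t)) ≤ 2 * δ + B :=
    quot_geo_close hδ hB hgeo hhyp H1 H2 H3 hacd.symm hγ hγ' htc
  -- compare the two lifted geodesics in X
  set G := gromovProd a b c with hG
  have hG0 : 0 ≤ G := gromovProd_nonneg a b c
  have hGb : G ≤ dist a b := by
    have := gromovProd_le_left a b c
    rwa [dist_comm b a] at this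
  have hGc : G ≤ dist a c := by
    have := gromovProd_le_right a b c
    rwa [dist_comm c a] at this
  have htG : t ≤ G + B := by
    have h1 : dist b c ≤ dist (π b) (π c) + 2 * B := H4 b c
    have h2 : t ≤ gromovProd (π a) (π b) (π c) := ht.2
    have h3 : gromovProd (π a) (π b) (π c) =
        (dist (π b) (π a) + dist (π c) (π a) - dist (π b) (π c)) / 2 := rfl
    have h4 : G = (dist b a + dist c a - dist b c) / 2 := rfl
    have h5 : dist (π b) (π a) ≤ dist b a := H1 b a
    have h6 : dist (π c) (π a) ≤ dist c a := H1 c a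
    have h7 : dist (π b) (π a) = dist b a := by
      rw [dist_comm, dist_comm b a]; exact habd.symm
    have h8 : dist (π c) (π a) = dist c a := by
      rw [dist_comm, dist_comm c a]; exact hacd.symm
    rw [h3] at h2
    rw [h4]
    linarith
  have hαγ : dist (α t) (γ t) ≤ δ + 2 * B := by
    rcases le_or_gt t G with htg | htg
    · have := hhyp a b c α γ hα hγ t ⟨ht.1, htg⟩
      linarith
    · have h1 : dist (α t) (α G) = |t - G| := hα.2.2 t htb G ⟨hG0, hGb⟩
      have h2 : dist (γ G) (γ t) = |G - t| := hγ.2.2 G ⟨hG0, hGc⟩ t htc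
      have h3 := hhyp a b c α γ hα hγ G ⟨hG0, le_refl G⟩
      have habs1 : |t - G| = t - G := abs_of_nonneg (by linarith)
      have habs2 : |G - t| = t - G := by rw [abs_sub_comm]; exact habs1
      have htGB : t - G ≤ B := by linarith
      calc dist (α t) (γ t) ≤ dist (α t) (α G) + dist (α G) (γ G) + dist (γ G) (γ t) :=
            dist_triangle4 _ _ _ _
        _ = (t - G) + dist (α G) (γ G) + (t - G) := by rw [h1, h2, habs1, habs2]
        _ ≤ δ + 2 * B := by linarith
  calc dist (α' t) (γ' t) ≤ dist (α' t) (π (α t)) + dist (π (α t)) (π (γ t))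
        + dist (π (γ t)) (γ' t) := dist_triangle4 _ _ _ _
    _ ≤ (2 * δ + B) + dist (α t) (γ t) + (2 * δ + B) := by
        have := H1 (α t) (γ t)
        have := dist_comm (π (γ t)) (γ' t)
        linarith [k1, k2, H1 (α t) (γ t), dist_comm (γ' t) (π (γ t)) ▸ k2]
    _ ≤ (2 * δ + B) + (δ + 2 * B) + (2 * δ + B) := by linarith
    _ = 5 * δ + 4 * B := by ring

end Abstract

/-- Hopf–Rinow: a complete, locally compact geodesic space is proper. -/
lemma properSpace_of_geodesic {X : Type*} [MetricSpace X] [CompleteSpace X]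
    [LocallyCompactSpace X] (hgeo : IsGeodesicSpace X) : ProperSpace X := by
  constructor
  intro x r
  by_contra hr
  set S : Set ℝ := {r | ¬ IsCompact (closedBall x r)} with hS
  have hne : S.Nonempty := ⟨r, hr⟩
  have hbdd : BddBelow S := by
    refine ⟨0, fun y hy => ?_⟩
    by_contra hy0
    push_neg at hy0
    exact hy (by rw [closedBall_eq_empty.2 hy0]; exact isCompact_empty)
  set s := sInf S with hs
  have hs0 : 0 ≤ s := le_csInf hne (fun y hy => by
    by_contra hy0
    push_neg at hy0
    exact hy (by rw [closedBall_eq_empty.2 hy0]; exact isCompact_empty))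
  have hlt : ∀ r' < s, IsCompact (closedBall x r') := by
    intro r' hr'
    by_contra hc
    exact absurd (csInf_le hbdd hc) (not_le.2 hr')
  -- step 1: closedBall x s is compact
  have hcs : IsCompact (closedBall x s) := by
    refine TotallyBounded.isCompact_of_isClosed ?_ isClosed_closedBall
    rw [Metric.totallyBounded_iff]
    intro ε hε
    rcases lt_or_ge s (ε / 2) with hse | hse
    · refine ⟨{x}, Set.finite_singleton x, ?_⟩
      intro z hz
      simp only [Set.mem_singleton_iff, Set.iUnion_iUnion_eq_left]
      rw [mem_closedBall] at hz
      rw [mem_ball]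
      linarith
    · have hr' : s - ε / 2 < s := by linarith
      have hcpt' := hlt (s - ε / 2) hr'
      obtain ⟨t, htf, htc⟩ := (Metric.totallyBounded_iff).1 hcpt'.totallyBounded (ε / 2)
        (by linarith)
      refine ⟨t, htf, ?_⟩
      intro z hz
      rw [mem_closedBall, dist_comm] at hz
      rcases le_or_gt (dist x z) (s - ε / 2) with hzle | hzgt
      · have : z ∈ closedBall x (s - ε / 2) := by rwa [mem_closedBall, dist_comm]
        obtain ⟨y, hy, hzy⟩ := Set.mem_iUnion₂.1 (htc this)
        exact Set.mem_iUnion₂.2 ⟨y, hy, by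
          rw [mem_ball] at hzy ⊢; linarith⟩
      · obtain ⟨α, hα⟩ := hgeo x z
        set w := α (s - ε / 2) with hw
        have hmem : (s - ε / 2) ∈ Set.Icc (0 : ℝ) (dist x z) := ⟨by linarith, hzgt.le⟩
        have hxw : dist x w = s - ε / 2 := geo_dist_left hα hmem
        have hwz : dist w z = dist x z - (s - ε / 2) := geo_dist_right hα hmem
        have hwball : w ∈ closedBall x (s - ε / 2) := by
          rw [mem_closedBall, dist_comm]; exact hxw.le
        obtain ⟨y, hy, hwy⟩ := Set.mem_iUnion₂.1 (htc hwball)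
        rw [mem_ball] at hwy
        refine Set.mem_iUnion₂.2 ⟨y, hy, ?_⟩
        rw [mem_ball]
        calc dist z y ≤ dist z w + dist w y := dist_triangle _ _ _
          _ < ε := by rw [dist_comm z w, hwz]; linarith
  -- step 2: some slightly larger ball is compact, contradiction
  have hbig : ∃ ε₀ > 0, IsCompact (closedBall x (s + ε₀)) := by
    have hloc : ∀ y : X, ∃ e > 0, IsCompact (closedBall y e) := by
      intro y
      obtain ⟨K, hK, hKn⟩ := exists_compact_mem_nhds y
      obtain ⟨e, he, heK⟩ := (Metric.nhds_basis_closedBall.mem_iff).1 hKn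
      exact ⟨e, he, hK.of_isClosed_subset isClosed_closedBall heK⟩
    choose e he hec using hloc
    have hcover : closedBall x s ⊆ ⋃ y : X, ball y (e y / 2) := by
      intro z _
      exact Set.mem_iUnion.2 ⟨z, by rw [mem_ball, dist_self]; linarith [he z]⟩
    obtain ⟨t, htc⟩ := hcs.elim_finite_subcover (fun y : X => ball y (e y / 2))
      (fun y => isOpen_ball) hcover
    have hxmem : x ∈ closedBall x s := by rw [mem_closedBall, dist_self]; exact hs0
    obtain ⟨y₀, hy₀t, _⟩ := Set.mem_iUnion₂.1 (htc hxmem)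
    have htne : t.Nonempty := ⟨y₀, hy₀t⟩
    set ε₀ := t.inf' htne (fun y => e y / 2) with hε₀
    have hε₀pos : 0 < ε₀ := by
      rw [hε₀, Finset.lt_inf'_iff]
      intro y _
      linarith [he y]
    refine ⟨ε₀, hε₀pos, ?_⟩
    have hsub : closedBall x (s + ε₀) ⊆ ⋃ y ∈ t, closedBall y (e y) := by
      intro z hz
      rw [mem_closedBall, dist_comm] at hz
      rcases le_or_gt (dist x z) s with hzle | hzgt
      · have : z ∈ closedBall x s := by rwa [mem_closedBall, dist_comm]
        obtain ⟨y, hy, hzy⟩ := Set.mem_iUnion₂.1 (htc this)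
        rw [mem_ball] at hzy
        exact Set.mem_iUnion₂.2 ⟨y, hy, by rw [mem_closedBall]; linarith [he y]⟩
      · obtain ⟨α, hα⟩ := hgeo x z
        have hmem : s ∈ Set.Icc (0 : ℝ) (dist x z) := ⟨hs0, hzgt.le⟩
        set w := α s with hw
        have hxw : dist x w = s := geo_dist_left hα hmem
        have hwz : dist w z = dist x z - s := geo_dist_right hα hmem
        have hwball : w ∈ closedBall x s := by rw [mem_closedBall, dist_comm]; exact hxw.le
        obtain ⟨y, hy, hwy⟩ := Set.mem_iUnion₂.1 (htc hwball)
        rw [mem_ball] at hwy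
        refine Set.mem_iUnion₂.2 ⟨y, hy, ?_⟩
        rw [mem_closedBall]
        have hε₀le : ε₀ ≤ e y / 2 := Finset.inf'_le _ hy
        calc dist z y ≤ dist z w + dist w y := dist_triangle _ _ _
          _ ≤ e y := by rw [dist_comm z w, hwz]; linarith
    have hK : IsCompact (⋃ y ∈ t, closedBall y (e y)) :=
      t.isCompact_biUnion (fun y _ => hec y)
    exact hK.of_isClosed_subset isClosed_closedBall hsub
  obtain ⟨ε₀, hε₀, hcb⟩ := hbig
  obtain ⟨r₁, hr₁S, hr₁lt⟩ := exists_lt_of_csInf_lt hne (show sInf S < s + ε₀ by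
    rw [← hs]; linarith)
  exact hr₁S (hcb.of_isClosed_subset isClosed_closedBall
    (closedBall_subset_closedBall hr₁lt.le))

section Orbit

variable {X : Type u} {T : Type*} [MetricSpace X] [Group T] [MulAction T X]

/-- The orbit pseudo-distance. -/
noncomputable def qd (T : Type*) [Group T] [MulAction T X] (x y : X) : ℝ :=
  Metric.infDist x (MulAction.orbit T y)

lemma qd_le_dist (x y : X) : qd T x y ≤ dist x y :=
  Metric.infDist_le_dist_of_mem (MulAction.mem_orbit_self y)

lemma qd_exists (hcpt : ∀ x : X, IsCompact (MulAction.orbit T x)) (x y : X) :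
    ∃ t : T, dist x (t • y) = qd T x y := by
  obtain ⟨z, hz, hdz⟩ := (hcpt y).exists_infDist_eq_dist (MulAction.nonempty_orbit y) x
  obtain ⟨t, ht⟩ := hz
  have ht' : t • y = z := ht
  exact ⟨t, by rw [ht']; exact hdz.symm⟩

lemma qd_le (x y : X) (t : T) : qd T x y ≤ dist x (t • y) :=
  Metric.infDist_le_dist_of_mem (MulAction.mem_orbit y t)

lemma qd_self (x : X) : qd T x x = 0 :=
  Metric.infDist_zero_of_mem (MulAction.mem_orbit_self x)

lemma qd_comm (hiso : ∀ (t : T) (x y : X), dist (t • x) (t • y) = dist x y)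
    (hcpt : ∀ x : X, IsCompact (MulAction.orbit T x)) (x y : X) :
    qd T x y = qd T y x := by
  have key : ∀ a b : X, qd T b a ≤ qd T a b := by
    intro a b
    obtain ⟨t, ht⟩ := qd_exists hcpt a b
    have : dist a (t • b) = dist b (t⁻¹ • a) := by
      rw [← hiso t⁻¹ a (t • b), inv_smul_smul, dist_comm]
    rw [← ht, this]
    exact qd_le b a t⁻¹
  exact le_antisymm (key y x) (key x y)

lemma qd_triangle (hiso : ∀ (t : T) (x y : X), dist (t • x) (t • y) = dist x y)
    (hcpt : ∀ x : X, IsCompact (MulAction.orbit T x)) (x y z : X) :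
    qd T x z ≤ qd T x y + qd T y z := by
  obtain ⟨t, ht⟩ := qd_exists hcpt x y
  obtain ⟨u, hu⟩ := qd_exists hcpt y z
  calc qd T x z ≤ dist x ((t * u) • z) := qd_le x z (t * u)
    _ ≤ dist x (t • y) + dist (t • y) ((t * u) • z) := dist_triangle _ _ _
    _ = dist x (t • y) + dist y (u • z) := by rw [mul_smul, hiso t y (u • z)]
    _ = qd T x y + qd T y z := by rw [ht, hu]

lemma dist_le_qd_add (hcpt : ∀ x : X, IsCompact (MulAction.orbit T x))
    {B : ℝ} (hdiam : ∀ x : X, Metric.diam (MulAction.orbit T x) ≤ B) (x y : X) :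
    dist x y ≤ qd T x y + B := by
  obtain ⟨t, ht⟩ := qd_exists hcpt x y
  have hb : dist (t • y) y ≤ B := by
    refine le_trans (Metric.dist_le_diam_of_mem (hcpt y).isBounded
      (MulAction.mem_orbit y t) (MulAction.mem_orbit_self y)) (hdiam y)
  calc dist x y ≤ dist x (t • y) + dist (t • y) y := dist_triangle _ _ _
    _ ≤ qd T x y + B := by rw [ht]; linarith

lemma qd_smul_left (hiso : ∀ (t : T) (x y : X), dist (t • x) (t • y) = dist x y)
    (hcpt : ∀ x : X, IsCompact (MulAction.orbit T x)) (t : T) (x y : X) :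
    qd T (t • x) y = qd T x y := by
  have key : ∀ (u : T) (a b : X), qd T (u • a) b ≤ qd T a b := by
    intro u a b
    obtain ⟨s, hs⟩ := qd_exists hcpt a b
    have : dist a (s • b) = dist (u • a) ((u * s) • b) := by
      rw [mul_smul, hiso u a (s • b)]
    rw [← hs, this]
    exact qd_le (u • a) b (u * s)
  refine le_antisymm (key t x y) ?_
  have := key t⁻¹ (t • x) y
  rwa [inv_smul_smul] at this

lemma qd_smul_right (t : T) (x y : X) : qd T x (t • y) = qd T x y := by
  unfold qd
  rw [MulAction.orbit_smul]

lemma qd_eq_zero (hcpt : ∀ x : X, IsCompact (MulAction.orbit T x)) {x y : X}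
    (h : qd T x y = 0) : x ∈ MulAction.orbit T y := by
  have hcl : IsClosed (MulAction.orbit T y) := (hcpt y).isClosed
  exact (hcl.mem_iff_infDist_zero (MulAction.nonempty_orbit y)).2 h

end Orbit

section OrbitQuot

variable {T : Type*} {X : Type u} [Group T] [MetricSpace X] [MulAction T X]

variable (T) in
/-- Well-definedness of `qd` on orbit classes. -/
lemma qd_wd (hiso : ∀ (t : T) (x y : X), dist (t • x) (t • y) = dist x y)
    (hcpt : ∀ x : X, IsCompact (MulAction.orbit T x))
    (a₁ b₁ a₂ b₂ : X) (ha : a₁ ∈ MulAction.orbit T a₂)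
    (hb : b₁ ∈ MulAction.orbit T b₂) : qd T a₁ b₁ = qd T a₂ b₂ := by
  obtain ⟨t, ht⟩ := ha
  obtain ⟨u, hu⟩ := hb
  have ht' : t • a₂ = a₁ := ht
  have hu' : u • b₂ = b₁ := hu
  rw [← ht', ← hu', qd_smul_left hiso hcpt, qd_smul_right]

variable (T X) in
/-- The orbit space, as a plain type (to avoid the quotient-topology instance). -/
def OrbitSpace : Type u := Quotient (MulAction.orbitRel T X)

variable (T) in
/-- Projection to the orbit space. -/
def orbitMk (x : X) : OrbitSpace T X := Quotient.mk (MulAction.orbitRel T X) x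

lemma orbitMk_surjective : Function.Surjective (orbitMk T (X := X)) := fun q =>
  Quotient.inductionOn (motive := fun q => ∃ x, orbitMk T x = q) q (fun x => ⟨x, rfl⟩)

lemma orbitMk_smul (t : T) (x : X) : orbitMk T (t • x) = orbitMk T x :=
  Quot.sound (MulAction.mem_orbit x t)

lemma orbitMk_exact {x y : X} (h : orbitMk T x = orbitMk T y) :
    x ∈ MulAction.orbit T y := by
  letI : Setoid X := MulAction.orbitRel T X
  exact Quotient.exact h

variable (T) in
/-- The distance on the orbit space. -/
noncomputable def orbitDist (hiso : ∀ (t : T) (x y : X), dist (t • x) (t • y) = dist x y)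
    (hcpt : ∀ x : X, IsCompact (MulAction.orbit T x)) :
    OrbitSpace T X → OrbitSpace T X → ℝ :=
  Quotient.lift₂ (qd T) (qd_wd T hiso hcpt)

variable (T) in
/-- The orbit space as a metric space. -/
noncomputable def orbitMetricSpace (hiso : ∀ (t : T) (x y : X), dist (t • x) (t • y) = dist x y)
    (hcpt : ∀ x : X, IsCompact (MulAction.orbit T x)) :
    MetricSpace (OrbitSpace T X) where
  dist := orbitDist T hiso hcpt
  dist_self := fun a => Quotient.inductionOn a (fun x => qd_self x)
  dist_comm := fun a b => Quotient.inductionOn₂ a b (fun x y => qd_comm hiso hcpt x y)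
  dist_triangle := fun a b c =>
    Quotient.inductionOn₃ a b c (fun x y z => qd_triangle hiso hcpt x y z)
  eq_of_dist_eq_zero := fun {a b} => Quotient.inductionOn₂ a b
    (fun x y h => Quot.sound (qd_eq_zero hcpt h))

end OrbitQuot

/-- The quotient of a complete, locally compact, geodesic `δ`-hyperbolic
space by a tremble group with compact orbits is again a complete, locally compact, geodesic
hyperbolic space, and the projection is a continuous surjective `(1, 2B)`-quasi-isometry
constant on orbits. -/
theorem tremble_quotient
    (X : Type u) (T : Type*) [MetricSpace X] [Group T] [MulAction T X]
    (δ : ℝ) (hδ : 0 ≤ δ)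
    (hiso : ∀ (t : T) (x y : X), dist (t • x) (t • y) = dist x y)
    (hcomplete : CompleteSpace X) (hlc : LocallyCompactSpace X)
    (hgeo : IsGeodesicSpace X) (hhyp : IsDeltaHyperbolic X δ)
    (hcpt : ∀ x : X, IsCompact (MulAction.orbit T x))
    (B : ℝ) (hB : 0 ≤ B)
    (hdiam : ∀ x : X, Metric.diam (MulAction.orbit T x) ≤ B) :
    ∃ δ' : ℝ, 0 ≤ δ' ∧ ∃ (X' : Type u) (_ : MetricSpace X'),
      CompleteSpace X' ∧ LocallyCompactSpace X' ∧ IsGeodesicSpace X' ∧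
      IsDeltaHyperbolic X' δ' ∧
      ∃ π : X → X', Continuous π ∧ Function.Surjective π ∧
        (∀ (t : T) (x : X), π (t • x) = π x) ∧
        ∀ x y : X, dist (π x) (π y) ≤ dist x y ∧ dist x y ≤ dist (π x) (π y) + 2 * B := by
  letI instQ : MetricSpace (OrbitSpace T X) := orbitMetricSpace T hiso hcpt
  let Q : Type u := OrbitSpace T X
  let π : X → Q := orbitMk T
  have hdist : ∀ x y : X, dist (π x) (π y) = qd T x y := fun _ _ => rfl
  -- basic properties of π
  have H0 : Function.Surjective π := orbitMk_surjective
  have H1 : ∀ x y : X, dist (π x) (π y) ≤ dist x y := by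
    intro x y
    rw [hdist]
    exact qd_le_dist x y
  have H2 : ∀ (x : X) (y' : Q), ∃ y : X, π y = y' ∧ dist x y = dist (π x) y' := by
    intro x y'
    obtain ⟨y, rfl⟩ := H0 y'
    obtain ⟨t, ht⟩ := qd_exists hcpt x y
    refine ⟨t • y, ?_, ?_⟩
    · exact orbitMk_smul t y
    · rw [hdist, ht]
  have H3 : ∀ y z : X, π y = π z → dist y z ≤ B := by
    intro y z h
    have : y ∈ MulAction.orbit T z := orbitMk_exact h
    exact le_trans (Metric.dist_le_diam_of_mem (hcpt z).isBounded this
      (MulAction.mem_orbit_self z)) (hdiam z)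
  have H4 : ∀ x y : X, dist x y ≤ dist (π x) (π y) + 2 * B := by
    intro x y
    rw [hdist]
    have := dist_le_qd_add hcpt hdiam x y
    linarith
  -- properness of X and of Q
  haveI : ProperSpace X := properSpace_of_geodesic hgeo
  have hπcont : Continuous π := by
    refine (LipschitzWith.of_dist_le_mul (K := 1) ?_).continuous
    intro x y
    rw [NNReal.coe_one, one_mul]
    exact H1 x y
  haveI hQproper : ProperSpace Q := by
    constructor
    intro x' r
    obtain ⟨x, rfl⟩ := H0 x'
    have hsub : closedBall (π x) r ⊆ π '' (closedBall x r) := by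
      intro y' hy'
      obtain ⟨y, hy, hyd⟩ := H2 x y'
      rw [mem_closedBall, dist_comm] at hy'
      refine ⟨y, ?_, hy⟩
      rw [mem_closedBall, dist_comm]
      rw [hyd]
      exact hy'
    exact ((isCompact_closedBall x r).image hπcont).of_isClosed_subset isClosed_closedBall hsub
  refine ⟨5 * δ + 4 * B, by linarith, Q, instQ, inferInstance, inferInstance,
    quot_geodesic hgeo H0 H1 H2,
    quot_hyperbolic hδ hB hgeo hhyp H0 H1 H2 H3 H4,
    π, hπcont, H0, ?_, ?_⟩
  · intro t x
    exact orbitMk_smul t x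
  · intro x y
    exact ⟨H1 x y, H4 x y⟩
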